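/- Let k be a field with char k ≠ 2, a ∈ k \ {0} a non-square, K = k(√a), and Gal(K/k) = ⟨σ⟩. Extend σ to K(x,y) by σ(x) = x, σ(y) = b/y for a constant b ∈ k \ {0}. Then K(x,y)^⟨σ⟩ is purely transcendental over k (of transcendence degree 2) if and only if the Hilbert symbol (a,b)_{2,k} = 0. -/

import Mathlib

/-- `L` is purely transcendental over `k` of transcendence degree `m`:
it is generated over `k` by `m` algebraically independent elements. -/
def IsRationalOfDeg (k : Type) {F : Type} [Field k] [Field F] [Algebra k F]
    (L : IntermediateField k F) (m : ℕ) : Prop :=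
  ∃ u : Fin m → F, (∀ i, u i ∈ L) ∧ AlgebraicIndependent k u ∧
    L = IntermediateField.adjoin k (Set.range u)

/-- The Hilbert symbol `(a,b)_{2,k}` vanishes, i.e. `X² − aY² − bZ²` has a
nontrivial zero over `k`. -/
def HilbertSymbolZero (k : Type) [Field k] (a b : k) : Prop :=
  ∃ x y z : k, (x ≠ 0 ∨ y ≠ 0 ∨ z ≠ 0) ∧ x ^ 2 - a * y ^ 2 - b * z ^ 2 = 0

/-!
If `b = p² - a q²` is a norm from `K`, put `c = p + q√a`, so that `c · σ(c) = b`. Then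
`t = √a (y + c) / (y - c)` is `σ`-invariant and `y = c (t + √a) / (t - √a)`, so `K(x, y) = K(x, t)`
and `x, t` stay algebraically independent; as `K(x, t) = k(x, t) ⊕ k(x, t) √a` with `σ` acting
by `-1` on the second summand, the invariant field is `k(x, t)`.

Conversely, `X = (y + b/y) / 2` and `Y = (y - b/y) / (2√a)` are invariant and satisfy
`X² - a Y² = b`. Writing them as quotients of polynomials in a transcendence basis `u` of the
invariant field over `k` gives a polynomial zero of the conic with nonzero last coordinate; it
specializes to a zero over `k` when `k` is infinite, and over a finite field of odd
characteristic every conic has a rational point anyway.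
-/

open IntermediateField Polynomial

namespace HilbertSymbolZero

variable {k : Type} [Field k] {a b : k}

theorem of_finite [Finite k] (h2 : (2 : k) ≠ 0) (ha : a ≠ 0) : HilbertSymbolZero k a b := by
  have : Fintype k := Fintype.ofFinite k
  have hchar : ringChar k ≠ 2 := fun hc => h2 <| by
    have : CharP k 2 := hc ▸ ringChar.charP k
    exact_mod_cast CharP.cast_eq_zero k 2
  obtain ⟨x, y, hxy⟩ := FiniteField.exists_root_sum_quadratic
    (f := X ^ 2 - C b) (g := C (-a) * X ^ 2) (degree_X_pow_sub_C two_pos b)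
    (degree_C_mul_X_pow 2 (neg_ne_zero.mpr ha)) (FiniteField.odd_card_of_char_ne_two hchar)
  refine ⟨x, y, 1, .inr (.inr one_ne_zero), ?_⟩
  simp only [eval_sub, eval_pow, eval_X, eval_C, eval_mul] at hxy
  linear_combination hxy

theorem of_mvPolynomial [Infinite k] {ι : Type*} {f g h : MvPolynomial ι k} (hh : h ≠ 0)
    (hfgh : f ^ 2 - .C a * g ^ 2 - .C b * h ^ 2 = 0) : HilbertSymbolZero k a b := by
  obtain ⟨v, hv⟩ : ∃ v, MvPolynomial.eval v h ≠ 0 := by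
    by_contra! hv
    exact hh (MvPolynomial.funext fun v => by simp [hv v])
  refine ⟨MvPolynomial.eval v f, MvPolynomial.eval v g, MvPolynomial.eval v h, .inr (.inr hv), ?_⟩
  simpa using congrArg (MvPolynomial.eval v) hfgh

theorem exists_sq_sub_mul_sq_eq (hnsq : ¬∃ r : k, r ^ 2 = a) (h : HilbertSymbolZero k a b) :
    ∃ p q : k, p ^ 2 - a * q ^ 2 = b := by
  obtain ⟨x, y, z, hxyz, heq⟩ := h
  have hz : z ≠ 0 := by
    rintro rfl
    rcases eq_or_ne y 0 with rfl | hy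
    · have hx : x = 0 := pow_eq_zero_iff two_ne_zero |>.mp (by linear_combination heq)
      simp_all
    · exact hnsq ⟨x / y, by field_simp; linear_combination heq⟩
  exact ⟨x / z, y / z, by field_simp; linear_combination heq⟩

end HilbertSymbolZero

theorem Transcendental.of_eq_mul_add_div_sub {R F : Type*} [CommRing R] [IsDomain R] [Field F]
    [Algebra R F] {y t : F} (c w : R) (hy : Transcendental R y)
    (hyt : y = algebraMap R F c * (t + algebraMap R F w) / (t - algebraMap R F w)) :
    Transcendental R t := by
  intro ht
  have hw := isAlgebraic_algebraMap (R := R) (A := F) w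
  rw [hyt, div_eq_mul_inv] at hy
  exact hy (((isAlgebraic_algebraMap c).mul (ht.add hw)).mul (IsAlgebraic.inv_iff.mpr (ht.sub hw)))

theorem algebraicIndependent_pair_iff {R A : Type*} [CommRing R] [CommRing A] [Algebra R A]
    {x y : A} : AlgebraicIndependent R ![x, y] ↔
      AlgebraicIndependent R ![x] ∧ Transcendental (Algebra.adjoin R (Set.range ![x])) y := by
  rw [← algebraicIndependent_equiv finSuccEquivLast.symm, ← AlgebraicIndependent.option_iff]
  convert Iff.rfl using 2
  funext o
  rcases o with _ | i
  · rfl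
  · rw [Subsingleton.elim i 0]; rfl

theorem AlgebraicIndependent.pair_of_eq_mul_add_div_sub {K F : Type*} [Field K] [Field F]
    [Algebra K F] {x y t : F} (c w : K) (hxy : AlgebraicIndependent K ![x, y])
    (hyt : y = algebraMap K F c * (t + algebraMap K F w) / (t - algebraMap K F w)) :
    AlgebraicIndependent K ![x, t] := by
  obtain ⟨hx, hy⟩ := algebraicIndependent_pair_iff.mp hxy
  refine algebraicIndependent_pair_iff.mpr ⟨hx, hy.of_eq_mul_add_div_sub
    (algebraMap K (Algebra.adjoin K (Set.range ![x])) c)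
    (algebraMap K (Algebra.adjoin K (Set.range ![x])) w) ?_⟩
  simpa only [← IsScalarTower.algebraMap_apply] using hyt

section Invariants

variable {k F : Type*} [Field k] [Field F] [Algebra k F]

theorem mem_fixedField_zpowers_iff (σ : F ≃ₐ[k] F) {z : F} :
    z ∈ fixedField (Subgroup.zpowers σ) ↔ σ z = z := by
  rw [mem_fixedField_iff]
  refine ⟨fun h => h σ (Subgroup.mem_zpowers σ), fun h f hf => ?_⟩
  have hσ : σ ∈ MulAction.stabilizer (F ≃ₐ[k] F) z := h
  exact Subgroup.zpowers_le.mpr hσ hf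

theorem exists_eq_aeval_div_aeval_of_mem_adjoin_range {ι : Type*} {u : ι → F} {z : F}
    (hz : z ∈ adjoin k (Set.range u)) :
    ∃ P Q : MvPolynomial ι k, MvPolynomial.aeval u Q ≠ 0 ∧
      z = MvPolynomial.aeval u P / MvPolynomial.aeval u Q := by
  obtain ⟨P, Q, rfl⟩ := (mem_adjoin_range_iff (F := k) u z).mp hz
  by_cases hQ : MvPolynomial.aeval u Q = 0
  · exact ⟨0, 1, by simp, by simp [hQ]⟩
  · exact ⟨P, Q, hQ, rfl⟩

theorem exists_eq_add_mul_of_mem_adjoin_simple {w : F} {s : k} (hw : w ^ 2 = algebraMap k F s)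
    {z : F} (hz : z ∈ k⟮w⟯) : ∃ α β : k, z = algebraMap k F α + algebraMap k F β * w := by
  have hg : (X ^ 2 - C s).Monic := monic_X_pow_sub_C s two_ne_zero
  have hgw : aeval w (X ^ 2 - C s) = 0 := by simp [hw]
  rw [← mem_toSubalgebra, adjoin_simple_toSubalgebra_of_isAlgebraic ⟨_, hg.ne_zero, hgw⟩,
    Algebra.adjoin_singleton_eq_range_aeval] at hz
  obtain ⟨f, rfl⟩ := hz
  have hdeg : (f %ₘ (X ^ 2 - C s)).natDegree ≤ 1 := by
    have := natDegree_modByMonic_lt f hg fun h => by simpa using congrArg natDegree h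
    rw [natDegree_X_pow_sub_C] at this
    omega
  obtain ⟨β, α, hαβ⟩ := exists_eq_X_add_C_of_natDegree_le_one hdeg
  refine ⟨α, β, ?_⟩
  rw [AlgHom.toRingHom_eq_coe, RingHom.coe_coe, ← aeval_modByMonic_eq_self_of_root hgw, hαβ]
  simp [add_comm]

/-- An element fixed by `σ` has vanishing `w`-coordinate in the decomposition `F = E ⊕ E w`. -/
theorem fixedField_zpowers_eq_of_adjoin_simple_eq_top (σ : F ≃ₐ[k] F) (h2 : (2 : F) ≠ 0)
    {E : IntermediateField k F} (hE : E ≤ fixedField (Subgroup.zpowers σ)) {w : F}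
    (hw2 : w ^ 2 ∈ E) (hσw : σ w = -w) (htop : E⟮w⟯ = ⊤) :
    fixedField (Subgroup.zpowers σ) = E := by
  refine le_antisymm (fun z hz => ?_) hE
  obtain ⟨α, β, rfl⟩ := exists_eq_add_mul_of_mem_adjoin_simple (s := ⟨w ^ 2, hw2⟩) rfl
    (htop ▸ mem_top : z ∈ E⟮w⟯)
  have hfix : ∀ e : E, σ e = e := fun e => (mem_fixedField_zpowers_iff σ).mp (hE e.2)
  have hz' := (mem_fixedField_zpowers_iff σ).mp hz
  simp only [IntermediateField.algebraMap_apply, map_add, map_mul, hfix, hσw] at hz'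
  have hβw : (β : F) * w = 0 := by
    simpa [h2] using (by linear_combination -hz' : 2 * ((β : F) * w) = 0)
  simp [hβw]

theorem mul_apply_self_eq_sq_sub_mul_sq (σ : F ≃ₐ[k] F) {w : F} (hσw : σ w = -w) {a : k}
    (hw : w ^ 2 = algebraMap k F a) (p q : k) :
    (algebraMap k F p + algebraMap k F q * w) * σ (algebraMap k F p + algebraMap k F q * w) =
      algebraMap k F (p ^ 2 - a * q ^ 2) := by
  simp only [map_add, map_mul, AlgEquiv.commutes, hσw, map_sub, map_pow]
  linear_combination -(algebraMap k F q) ^ 2 * hw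

/-- Since `σ` swaps `y ↔ b / y` and `c ↔ b / c`, the Cayley transform `(y + c) / (y - c)` is
anti-invariant, and multiplying by the anti-invariant `w` makes it invariant. -/
theorem apply_mul_add_div_sub_eq_self (σ : F ≃ₐ[k] F) {w y c b : F} (hσw : σ w = -w)
    (hσy : σ y = b / y) (hc : c * σ c = b) (hb : b ≠ 0) (hy : y ≠ 0) (hyc : y - c ≠ 0) :
    σ (w * (y + c) / (y - c)) = w * (y + c) / (y - c) := by
  have hσc : σ c ≠ 0 := right_ne_zero_of_mul (hc ▸ hb)
  have hcy : c - y ≠ 0 := by rwa [← neg_sub, neg_ne_zero]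
  rw [map_div₀, map_mul, map_add, map_sub, hσw, hσy, ← hc]
  field_simp
  ring

end Invariants

theorem algebraMap_mem_of_adjoin_simple_eq_top {k K F : Type*} [Field k] [Field K] [Field F]
    [Algebra k K] [Algebra K F] [Algebra k F] [IsScalarTower k K F] {s : K} (hs : adjoin k {s} = ⊤)
    {M : IntermediateField k F} (hsM : algebraMap K F s ∈ M) (r : K) : algebraMap K F r ∈ M := by
  have hr : algebraMap K F r ∈ (adjoin k {s}).map (IsScalarTower.toAlgHom k K F) := by
    rw [hs]
    exact ⟨r, mem_top, rfl⟩
  rw [adjoin_map, Set.image_singleton] at hr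
  exact adjoin_le_iff.mpr (Set.singleton_subset_iff.mpr hsM) hr

theorem IntermediateField.eq_top_of_adjoin_eq_top {k K F : Type*} [Field k] [Field K] [Field F]
    [Algebra K F] [Algebra k F] {S : Set F} (hS : adjoin K S = ⊤)
    {M : IntermediateField k F} (hKM : ∀ r : K, algebraMap K F r ∈ M) (hSM : S ⊆ M) : M = ⊤ := by
  let M' : IntermediateField K F := { M.toSubfield with algebraMap_mem' := hKM }
  have hSM' : adjoin K S ≤ M' := adjoin_le_iff.mpr hSM
  rw [hS] at hSM'
  exact eq_top_iff.mpr fun z _ => hSM' mem_top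

section Descent

variable {k F : Type} [Field k] [Field F] [Algebra k F]

theorem HilbertSymbolZero.of_mem_adjoin_algebraicIndependent [Infinite k] {a b : k}
    {ι : Type*} {u : ι → F} (hu : AlgebraicIndependent k u) {X Y : F}
    (hX : X ∈ adjoin k (Set.range u)) (hY : Y ∈ adjoin k (Set.range u))
    (hXY : X ^ 2 - algebraMap k F a * Y ^ 2 = algebraMap k F b) : HilbertSymbolZero k a b := by
  obtain ⟨P, Q, hQ, rfl⟩ := exists_eq_aeval_div_aeval_of_mem_adjoin_range hX
  obtain ⟨R, T, hT, rfl⟩ := exists_eq_aeval_div_aeval_of_mem_adjoin_range hY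
  refine .of_mvPolynomial (f := P * T) (g := R * Q) (h := Q * T) ?_ ?_
  · intro hQT
    simpa [hQ, hT] using congrArg (MvPolynomial.aeval u) hQT
  · refine algebraicIndependent_iff.mp hu _ ?_
    simp only [map_sub, map_mul, map_pow, MvPolynomial.aeval_C]
    field_simp at hXY
    linear_combination hXY

theorem HilbertSymbolZero.of_isRationalOfDeg {a b : k} (h2 : (2 : k) ≠ 0) (ha : a ≠ 0)
    {L : IntermediateField k F} {m : ℕ} (hL : IsRationalOfDeg k L m) {X Y : F}
    (hX : X ∈ L) (hY : Y ∈ L) (hXY : X ^ 2 - algebraMap k F a * Y ^ 2 = algebraMap k F b) :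
    HilbertSymbolZero k a b := by
  rcases finite_or_infinite k with hk | hk
  · exact .of_finite h2 ha
  · obtain ⟨u, -, hu, rfl⟩ := hL
    exact .of_mem_adjoin_algebraicIndependent hu hX hY hXY

theorem hilbertSymbolZero_of_isRationalOfDeg_fixedField (h2 : (2 : k) ≠ 0) {a b : k}
    (ha : a ≠ 0) (hb : b ≠ 0) {w y : F} (hw2 : w ^ 2 = algebraMap k F a) (hy : y ≠ 0)
    (σ : F ≃ₐ[k] F) (hσw : σ w = -w) (hσy : σ y = algebraMap k F b / y) {m : ℕ}
    (hrat : IsRationalOfDeg k (fixedField (Subgroup.zpowers σ)) m) : HilbertSymbolZero k a b := by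
  have hw : w ≠ 0 := fun h => ha <| by simpa [h] using hw2.symm
  have h2F : (2 : F) ≠ 0 := fun h => h2 <| (algebraMap k F).injective <| by
    rw [map_ofNat, map_zero, h]
  have hb' : algebraMap k F b ≠ 0 := by simpa using hb
  have hσb : σ (algebraMap k F b) = algebraMap k F b := σ.commutes b
  refine .of_isRationalOfDeg h2 ha hrat (X := (y + algebraMap k F b / y) / 2)
    (Y := (y - algebraMap k F b / y) / (2 * w)) ?_ ?_ ?_
  · rw [mem_fixedField_zpowers_iff, map_div₀, map_add, map_div₀, hσy, hσb, map_ofNat]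
    field_simp
    ring
  · rw [mem_fixedField_zpowers_iff, map_div₀, map_sub, map_div₀, hσy, hσb, map_mul, hσw,
      map_ofNat]
    field_simp
    ring
  · rw [← hw2]
    field_simp
    ring

end Descent

section FixedField

variable {k K F : Type} [Field k] [Field K] [Field F] [Algebra k K] [Algebra K F] [Algebra k F]
  [IsScalarTower k K F]

theorem isRationalOfDeg_fixedField_of_eq_mul_add_div_sub (h2 : (2 : F) ≠ 0) {a : k} {sqa : K}
    (hw2 : algebraMap K F sqa ^ 2 = algebraMap k F a) (hKgen : adjoin k {sqa} = ⊤) {x y : F}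
    (hind : AlgebraicIndependent K ![x, y]) (hadj : adjoin K {x, y} = ⊤) (σ : F ≃ₐ[k] F)
    (hσK : σ (algebraMap K F sqa) = -algebraMap K F sqa) (hx : σ x = x) {t : F} (hσt : σ t = t)
    (c : K) (hyt : y = algebraMap K F c * (t + algebraMap K F sqa) / (t - algebraMap K F sqa)) :
    IsRationalOfDeg k (fixedField (Subgroup.zpowers σ)) 2 := by
  set w := algebraMap K F sqa
  set E := adjoin k {x, t}
  have hE : E ≤ fixedField (Subgroup.zpowers σ) := adjoin_le_iff.mpr <| by
    rintro _ (rfl | rfl)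
    exacts [(mem_fixedField_zpowers_iff σ).mpr hx, (mem_fixedField_zpowers_iff σ).mpr hσt]
  have htop : E⟮w⟯ = ⊤ := by
    refine restrictScalars_injective k ?_
    rw [restrictScalars_adjoin, restrictScalars_top]
    have hxt : ({x, t} : Set F) ⊆ adjoin k ((E : Set F) ∪ {w}) :=
      fun z hz => subset_adjoin k _ (Or.inl (subset_adjoin k _ hz))
    have hw : w ∈ adjoin k ((E : Set F) ∪ {w}) := subset_adjoin _ _ (by simp)
    have hK := algebraMap_mem_of_adjoin_simple_eq_top hKgen hw
    refine eq_top_of_adjoin_eq_top hadj hK ?_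
    rintro _ (rfl | rfl)
    · exact hxt (by simp)
    · have ht := hxt (by simp : t ∈ ({x, t} : Set F))
      rw [hyt]
      exact div_mem (mul_mem (hK c) (add_mem ht hw)) (sub_mem ht hw)
  have hfix : fixedField (Subgroup.zpowers σ) = E :=
    fixedField_zpowers_eq_of_adjoin_simple_eq_top σ h2 hE (hw2 ▸ _root_.algebraMap_mem E a) hσK htop
  refine ⟨![x, t], ?_, ?_, by rw [hfix, Matrix.range_cons_cons_empty]⟩
  · simp only [Fin.forall_fin_two, hfix]
    exact ⟨subset_adjoin k _ (by simp), subset_adjoin k _ (by simp)⟩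
  · exact (hind.pair_of_eq_mul_add_div_sub c sqa hyt).restrictScalars (algebraMap k K).injective

theorem isRationalOfDeg_fixedField_of_sq_sub_mul_sq_eq (h2 : (2 : F) ≠ 0) {a b : k} (ha : a ≠ 0)
    (hb : b ≠ 0) {p q : k} (hpq : p ^ 2 - a * q ^ 2 = b) {sqa : K}
    (hw2 : algebraMap K F sqa ^ 2 = algebraMap k F a) (hKgen : adjoin k {sqa} = ⊤) {x y : F}
    (hind : AlgebraicIndependent K ![x, y]) (hadj : adjoin K {x, y} = ⊤) (σ : F ≃ₐ[k] F)
    (hσK : σ (algebraMap K F sqa) = -algebraMap K F sqa) (hx : σ x = x)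
    (hy : σ y = algebraMap k F b / y) :
    IsRationalOfDeg k (fixedField (Subgroup.zpowers σ)) 2 := by
  set w := algebraMap K F sqa
  have hw : w ≠ 0 := fun h => ha <| by simpa [h] using hw2.symm
  set cK : K := algebraMap k K p + algebraMap k K q * sqa
  set c := algebraMap K F cK
  have hcσc : c * σ c = algebraMap k F b := by
    have hc_eq : c = algebraMap k F p + algebraMap k F q * w := by
      simp only [c, cK, w, map_add, map_mul, ← IsScalarTower.algebraMap_apply]
    rw [hc_eq, mul_apply_self_eq_sq_sub_mul_sq σ hσK hw2, hpq]
  have hb' : algebraMap k F b ≠ 0 := by simpa using hb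
  have hc : c ≠ 0 := left_ne_zero_of_mul (hcσc ▸ hb')
  have hyc : y - c ≠ 0 := sub_ne_zero.mpr fun h =>
    hind.transcendental 1 (by simpa [h] using isAlgebraic_algebraMap (R := K) (A := F) cK)
  set t := w * (y + c) / (y - c)
  have ht : t * (y - c) = w * (y + c) := div_mul_cancel₀ _ hyc
  have htw : t - w ≠ 0 := by
    intro h
    rw [sub_eq_zero.mp h] at ht
    exact mul_ne_zero (mul_ne_zero h2 hw) hc (by linear_combination -ht)
  have hyt : y = c * (t + w) / (t - w) := by
    rw [eq_div_iff htw]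
    linear_combination ht
  have hσt : σ t = t :=
    apply_mul_add_div_sub_eq_self σ hσK hy hcσc hb' (by simpa using hind.ne_zero 1) hyc
  exact isRationalOfDeg_fixedField_of_eq_mul_add_div_sub h2 hw2 hKgen hind hadj σ hσK hx hσt cK
    hyt

end FixedField

/-- For `K = k(√a)` with `Gal(K/k) = ⟨σ⟩` extended to `K(x,y)` by `σ(x) = x`,
`σ(y) = b/y` (`b ∈ k \ {0}`), the fixed field `K(x,y)^⟨σ⟩` is purely
transcendental of degree 2 over `k` iff `(a,b)_{2,k} = 0`. -/
theorem stmt6 (k K F : Type) [Field k] [Field K] [Field F]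
    [Algebra k K] [Algebra K F] [Algebra k F] [IsScalarTower k K F]
    (h2 : (2 : k) ≠ 0) (a b : k) (ha : a ≠ 0) (hb : b ≠ 0)
    (hnsq : ¬∃ r : k, r ^ 2 = a)
    (sqa : K) (hsqa : sqa ^ 2 = algebraMap k K a)
    (hKgen : IntermediateField.adjoin k {sqa} = ⊤)
    (x y : F) (hind : AlgebraicIndependent K ![x, y])
    (hadj : IntermediateField.adjoin K {x, y} = ⊤)
    (σ : F ≃ₐ[k] F)
    (hσK : σ (algebraMap K F sqa) = - algebraMap K F sqa)
    (hx : σ x = x) (hy : σ y = algebraMap k F b / y) :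
    IsRationalOfDeg k (IntermediateField.fixedField (Subgroup.zpowers σ)) 2 ↔
      HilbertSymbolZero k a b := by
  have hw2 : algebraMap K F sqa ^ 2 = algebraMap k F a := by
    rw [← map_pow, hsqa, ← IsScalarTower.algebraMap_apply]
  refine ⟨fun hrat => ?_, fun hab => ?_⟩
  · exact hilbertSymbolZero_of_isRationalOfDeg_fixedField h2 ha hb hw2
      (by simpa using hind.ne_zero 1) σ hσK hy hrat
  · have h2F : (2 : F) ≠ 0 := fun h => h2 <| (algebraMap k F).injective <| by
      rw [map_ofNat, map_zero, h]
    obtain ⟨p, q, hpq⟩ := hab.exists_sq_sub_mul_sq_eq hnsq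
    exact isRationalOfDeg_fixedField_of_sq_sub_mul_sq_eq h2F ha hb hpq hw2 hKgen hind hadj σ hσK
      hx hy
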